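/- Let q(x,ξ) = (1/2) c(x) ξ² + 2 ∫_{(0,∞)} (1 − cos(ξ y)) ν(x,dy) be a one-dimensional symmetric symbol (bounded c ≥ 0, Lévy kernel ν with sup_x ∫ min{1,y²} ν(x,dy) < ∞) satisfying lim_{ξ→0} inf_{x∈ℝ} q(x,ξ)/ξ² = ∞, and set N(x,y) := ν(x,(y,∞)). Fix 0 < a < b < π and r > 0. If either ∫_r^∞ dy / ( y² · inf_{x∈ℝ} [ N(x, b y) − N(x, (a+π) y) ] ) < ∞, or ∫_r^∞ ( inf_{x∈ℝ} ∫_{(0,ξ]} y² ν(x,dy) )^{-1} dξ < ∞, then there exists r' > 0 with ∫_{{|ξ|<r'}} dξ / inf_{x∈ℝ} q(x,ξ) < ∞. -/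

import Mathlib

open MeasureTheory Filter Topology
open scoped ENNReal

/-- A one-dimensional symmetric symbol:
`q(x,ξ) = (1/2)c(x)ξ² + 2∫_{(0,∞)} (1 − cos(ξy)) ν(x,dy)`, valued in `[0,∞]`. -/
noncomputable def oneDimSymbol (c : ℝ → ℝ) (ν : ℝ → MeasureTheory.Measure ℝ)
    (x ξ : ℝ) : ℝ≥0∞ :=
  ENNReal.ofReal ((1 / 2) * c x * ξ ^ 2) +
    2 * ∫⁻ y in Set.Ioi (0 : ℝ), ENNReal.ofReal (1 - Real.cos (ξ * y)) ∂(ν x)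

/-! The integrand `1 / inf_x q(x,ξ)` is even, so it suffices to integrate over `(0, 1/r)`;
the substitution `ξ = 1/y` turns this into an integral over `(r, ∞)` with weight `1/y²`.
There `q(x, 1/y)` is bounded below in two ways: since `1 - cos` is bounded away from `0` on
`(b, a + π]`, by a multiple of `ν(x, (by, (a+π)y])`; and since `1 - cos t ≥ 2t²/π²` on `[0, π]`,
by a multiple of `y⁻² ∫_{(0,y]} z² ν(x,dz)`. -/

open Set Real

theorem oneDimSymbol_neg (c : ℝ → ℝ) (ν : ℝ → Measure ℝ) (x ξ : ℝ) :
    oneDimSymbol c ν x (-ξ) = oneDimSymbol c ν x ξ := by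
  simp only [oneDimSymbol, neg_sq, neg_mul, Real.cos_neg]

theorem two_mul_setLIntegral_le_oneDimSymbol (c : ℝ → ℝ) (ν : ℝ → Measure ℝ) (x ξ : ℝ)
    {s : Set ℝ} (hs : MeasurableSet s) (hs_pos : s ⊆ Ioi 0) {f : ℝ → ℝ≥0∞}
    (hf : ∀ y ∈ s, f y ≤ ENNReal.ofReal (1 - cos (ξ * y))) :
    2 * ∫⁻ y in s, f y ∂(ν x) ≤ oneDimSymbol c ν x ξ :=
  calc 2 * ∫⁻ y in s, f y ∂(ν x)
      ≤ 2 * ∫⁻ y in Ioi 0, ENNReal.ofReal (1 - cos (ξ * y)) ∂(ν x) := by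
        exact mul_le_mul_right ((setLIntegral_mono' hs hf).trans (lintegral_mono_set hs_pos)) 2
    _ ≤ oneDimSymbol c ν x ξ := le_add_self

theorem setLIntegral_ball_zero_le_of_even {g : ℝ → ℝ≥0∞} (hg : ∀ ξ, g (-ξ) = g ξ) (R : ℝ) :
    ∫⁻ ξ in Metric.ball 0 R, g ξ ≤ 2 * ∫⁻ ξ in Ioo 0 R, g ξ := by
  have hball : Metric.ball (0 : ℝ) R ⊆ Ioo (-R) 0 ∪ Ico 0 R := by
    intro ξ hξ
    rw [Real.ball_eq_Ioo, zero_sub, zero_add] at hξ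
    rcases lt_or_ge ξ 0 with h | h
    exacts [Or.inl ⟨hξ.1, h⟩, Or.inr ⟨h, hξ.2⟩]
  have hneg : ∫⁻ ξ in Ioo (-R) 0, g ξ = ∫⁻ ξ in Ioo 0 R, g ξ := by
    simpa only [hg, neg_preimage, neg_Ioo, neg_zero] using
      (Measure.measurePreserving_neg (volume : Measure ℝ)).setLIntegral_comp_preimage_emb
        (MeasurableEquiv.neg ℝ).measurableEmbedding g (Ioo 0 R)
  calc ∫⁻ ξ in Metric.ball 0 R, g ξ
      ≤ ∫⁻ ξ in Ioo (-R) 0 ∪ Ico 0 R, g ξ := lintegral_mono_set hball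
    _ ≤ (∫⁻ ξ in Ioo (-R) 0, g ξ) + ∫⁻ ξ in Ico 0 R, g ξ := lintegral_union_le _ _ _
    _ = 2 * ∫⁻ ξ in Ioo 0 R, g ξ := by
        rw [hneg, setLIntegral_congr Ioo_ae_eq_Ico.symm, two_mul]

theorem setLIntegral_Ioo_zero_inv_eq {r : ℝ} (hr : 0 < r) (g : ℝ → ℝ≥0∞) :
    ∫⁻ ξ in Ioo 0 r⁻¹, g ξ = ∫⁻ y in Ioi r, ENNReal.ofReal (y ^ 2)⁻¹ * g y⁻¹ := by
  rw [← inv_Ioi₀ hr, ← image_inv_eq_inv, lintegral_image_eq_lintegral_abs_deriv_mul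
    measurableSet_Ioi (fun y hy => (hasDerivAt_inv (hr.trans hy).ne').hasDerivWithinAt)
    inv_injective.injOn]
  refine setLIntegral_congr_fun measurableSet_Ioi fun y _ => ?_
  rw [abs_neg, abs_of_nonneg (by positivity)]

theorem setLIntegral_Ioo_zero_inv_lt_top {r C : ℝ} (hr : 0 < r) (hC : 0 < C)
    {q F : ℝ → ℝ≥0∞} (hle : ∀ y, r < y → ENNReal.ofReal C * F y ≤ ENNReal.ofReal (y ^ 2) * q y⁻¹)
    (hF : ∫⁻ y in Ioi r, (F y)⁻¹ < ∞) :
    ∫⁻ ξ in Ioo 0 r⁻¹, (q ξ)⁻¹ < ∞ := by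
  have hC0 : ENNReal.ofReal C ≠ 0 := by simpa using hC
  rw [setLIntegral_Ioo_zero_inv_eq hr]
  calc ∫⁻ y in Ioi r, ENNReal.ofReal (y ^ 2)⁻¹ * (q y⁻¹)⁻¹
      ≤ ∫⁻ y in Ioi r, (ENNReal.ofReal C)⁻¹ * (F y)⁻¹ := by
        refine setLIntegral_mono' measurableSet_Ioi fun y hy => ?_
        have hy2 : 0 < y ^ 2 := pow_pos (hr.trans hy) 2
        rw [ENNReal.ofReal_inv_of_pos hy2,
          ← ENNReal.mul_inv (.inl (ENNReal.ofReal_pos.2 hy2).ne') (.inl ENNReal.ofReal_ne_top),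
          ← ENNReal.mul_inv (.inl hC0) (.inl ENNReal.ofReal_ne_top)]
        exact ENNReal.inv_le_inv.2 (hle y hy)
    _ = (ENNReal.ofReal C)⁻¹ * ∫⁻ y in Ioi r, (F y)⁻¹ :=
        lintegral_const_mul' _ _ (ENNReal.inv_ne_top.2 hC0)
    _ < ∞ := ENNReal.mul_lt_top (ENNReal.inv_lt_top.2 (pos_iff_ne_zero.2 hC0)) hF

theorem cos_le_max_of_mem_Ioc {a b t : ℝ} (ha : 0 < a) (hab : a < b) (hbπ : b < π)
    (ht : t ∈ Ioc b (a + π)) : cos t ≤ max (cos b) (cos (a + π)) := by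
  rcases le_or_gt t π with h | h
  · exact le_max_of_le_left (cos_le_cos_of_nonneg_of_le_pi (by linarith) h ht.1.le)
  · refine le_max_of_le_right ?_
    rw [← sub_add_cancel t π, cos_add_pi, cos_add_pi, neg_le_neg_iff]
    exact cos_le_cos_of_nonneg_of_le_pi (by linarith) (by linarith) (by linarith [ht.2])

theorem max_cos_lt_one {a b : ℝ} (ha : 0 < a) (hab : a < b) (hbπ : b < π) :
    max (cos b) (cos (a + π)) < 1 := by
  refine max_lt ?_ ?_
  · simpa using cos_lt_cos_of_nonneg_of_le_pi le_rfl hbπ.le (ha.trans hab)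
  · have := cos_lt_cos_of_nonneg_of_le_pi ha.le le_rfl (hab.trans hbπ)
    rw [cos_pi] at this
    rw [cos_add_pi]
    linarith

theorem ofReal_mul_measure_Ioc_le_oneDimSymbol_inv (c : ℝ → ℝ) (ν : ℝ → Measure ℝ) (x : ℝ)
    {a b y : ℝ} (ha : 0 < a) (hab : a < b) (hbπ : b < π) (hy : 0 < y) :
    ENNReal.ofReal (2 * (1 - max (cos b) (cos (a + π)))) * ν x (Ioc (b * y) ((a + π) * y)) ≤
      oneDimSymbol c ν x y⁻¹ := by
  have hδ : 0 ≤ 1 - max (cos b) (cos (a + π)) := by linarith [max_cos_lt_one ha hab hbπ]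
  rw [ENNReal.ofReal_mul zero_le_two, ENNReal.ofReal_ofNat, mul_assoc, ← setLIntegral_const]
  refine two_mul_setLIntegral_le_oneDimSymbol c ν x _ measurableSet_Ioc
    (fun z hz => (mul_pos (ha.trans hab) hy).trans hz.1) fun z hz => ?_
  refine ENNReal.ofReal_le_ofReal (sub_le_sub_left (cos_le_max_of_mem_Ioc ha hab hbπ ⟨?_, ?_⟩) 1)
  · rw [inv_mul_eq_div, lt_div_iff₀ hy]; exact hz.1
  · rw [inv_mul_eq_div, div_le_iff₀ hy]; exact hz.2

theorem ofReal_mul_setLIntegral_sq_le_oneDimSymbol_inv (c : ℝ → ℝ) (ν : ℝ → Measure ℝ)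
    (x : ℝ) {y : ℝ} (hy : 0 < y) :
    ENNReal.ofReal (4 / π ^ 2) * ∫⁻ z in Ioc 0 y, ENNReal.ofReal (z ^ 2) ∂(ν x) ≤
      ENNReal.ofReal (y ^ 2) * oneDimSymbol c ν x y⁻¹ := by
  calc ENNReal.ofReal (4 / π ^ 2) * ∫⁻ z in Ioc 0 y, ENNReal.ofReal (z ^ 2) ∂(ν x)
      = ENNReal.ofReal (y ^ 2) *
          (2 * ∫⁻ z in Ioc 0 y, ENNReal.ofReal (2 / π ^ 2 * (y⁻¹ * z) ^ 2) ∂(ν x)) := by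
        rw [← mul_assoc, ← lintegral_const_mul' _ _ ENNReal.ofReal_ne_top,
          ← lintegral_const_mul' _ _ (by finiteness)]
        refine lintegral_congr fun z => ?_
        rw [← ENNReal.ofReal_ofNat 2, ← ENNReal.ofReal_mul (by positivity),
          ← ENNReal.ofReal_mul (by positivity), ← ENNReal.ofReal_mul (by positivity)]
        congr 1
        field_simp
        ring
    _ ≤ ENNReal.ofReal (y ^ 2) * oneDimSymbol c ν x y⁻¹ := by
        refine mul_le_mul_right (two_mul_setLIntegral_le_oneDimSymbol c ν x _ measurableSet_Ioc
          (fun z hz => hz.1) fun z hz => ENNReal.ofReal_le_ofReal ?_) _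
        have hz1 : y⁻¹ * z ≤ 1 := by rw [inv_mul_eq_div, div_le_one hy]; exact hz.2
        have := cos_le_one_sub_mul_cos_sq (x := y⁻¹ * z)
          (by rw [abs_of_pos (by have := hz.1; positivity)]; linarith [pi_gt_three])
        linarith

theorem stmt17 (c : ℝ → ℝ) (ν : ℝ → MeasureTheory.Measure ℝ)
    (a b r : ℝ) (ha : 0 < a) (hab : a < b) (hbπ : b < Real.pi) (hr : 0 < r)
    (hcond :
      (∫⁻ y in Set.Ioi r,
        (ENNReal.ofReal (y ^ 2) * ⨅ x, ν x (Set.Ioc (b * y) ((a + Real.pi) * y)))⁻¹ < ∞) ∨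
      (∫⁻ ξ in Set.Ioi r,
        (⨅ x, ∫⁻ y in Set.Ioc (0 : ℝ) ξ, ENNReal.ofReal (y ^ 2) ∂(ν x))⁻¹ < ∞)) :
    ∃ r' > (0 : ℝ), ∫⁻ ξ in Metric.ball (0 : ℝ) r',
      (⨅ x, oneDimSymbol c ν x ξ)⁻¹ < ∞ := by
  set q : ℝ → ℝ≥0∞ := fun ξ => ⨅ x, oneDimSymbol c ν x ξ
  have hq_even : ∀ ξ, (q (-ξ))⁻¹ = (q ξ)⁻¹ := fun ξ => by simp only [q, oneDimSymbol_neg]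
  refine ⟨r⁻¹, inv_pos.2 hr, (setLIntegral_ball_zero_le_of_even hq_even r⁻¹).trans_lt
    (ENNReal.mul_lt_top ENNReal.ofNat_lt_top ?_)⟩
  rcases hcond with hN | hM
  · refine setLIntegral_Ioo_zero_inv_lt_top hr
      (mul_pos two_pos (sub_pos.2 (max_cos_lt_one ha hab hbπ))) (fun y hy => ?_) hN
    rw [mul_left_comm]
    exact mul_le_mul_right (le_iInf fun x => (mul_le_mul_right (iInf_le _ x) _).trans
      (ofReal_mul_measure_Ioc_le_oneDimSymbol_inv c ν x ha hab hbπ (hr.trans hy))) _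
  · refine setLIntegral_Ioo_zero_inv_lt_top hr (C := 4 / π ^ 2) (by positivity) (fun y hy => ?_) hM
    have hy2 : ENNReal.ofReal (y ^ 2) ≠ 0 := (ENNReal.ofReal_pos.2 (pow_pos (hr.trans hy) 2)).ne'
    rw [ENNReal.mul_iInf_of_ne hy2 ENNReal.ofReal_ne_top]
    exact le_iInf fun x => (mul_le_mul_right (iInf_le _ x) _).trans
      (ofReal_mul_setLIntegral_sq_le_oneDimSymbol_inv c ν x (hr.trans hy))
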